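/- arXiv:2007.08458 — 3 statements merged into one kernel-verified Lean document; each statement's English description precedes it below -/
import Mathlib

section
/- Let H be a complex Hilbert space, let A_1,…,A_p be bounded linear operators on H, let Ã be the companion operator of A_1,…,A_p on H^p, and assume there exists j_0 ∈ ℕ with ‖Ã^{j_0}‖ < 1. Then for every z ∈ ℂ with |z| ≤ 1: (i) the operator Id_{H^p} − z Ã is invertible in the bounded operators on H^p; (ii) the operator 𝒜(z) := Id_H − A_1 z − ⋯ − A_p z^p is invertible in the bounded operators on H; and (iii) the series Σ_{j=0}^∞ z^j P_1 ∘ Ã^j ∘ P_1* converges absolutely in operator norm and equals 𝒜(z)^{−1}. -/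
/-!
Some power of `z • Ã` has norm `< 1`, so the Neumann series `∑ (z • Ã) ^ j` converges absolutely
and inverts `1 - z • Ã`. Its compression `P₁ (1 - z • Ã)⁻¹ P₁*` inverts `𝒜(z)`, because
`1 - z • Ã` maps `(g, z g, …, z ^ (p - 1) g)` to `(𝒜(z) g, 0, …, 0)`, and conversely every `f`
whose image under `1 - z • Ã` lives in the first coordinate has this shape with `g = f₀`.
-/

theorem summable_norm_pow_of_norm_pow_lt_one {R : Type*} [NormedRing R] {a : R} {n : ℕ}
    (h : ‖a ^ n‖ < 1) : Summable fun j : ℕ => ‖a ^ j‖ := by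
  rcases n.eq_zero_or_pos with rfl | hn
  · rw [pow_zero] at h
    have : Subsingleton R := not_nontrivial_iff_subsingleton.mp fun _ =>
      (one_le_norm_one R).not_gt h
    simp only [Subsingleton.elim _ (0 : R), norm_zero]
    exact summable_zero
  have : NeZero n := ⟨hn.ne'⟩
  have hblocks := (summable_norm_geometric_of_norm_lt_one h).mul_norm
    (g := fun r : Fin n => a ^ (r : ℕ)) Summable.of_finite
  refine (Nat.divModEquiv n).symm.summable_iff.mp (hblocks.congr fun x => ?_)
  rw [Function.comp_apply, Nat.divModEquiv_symm_apply, pow_add, pow_mul']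

theorem ContinuousLinearMap.summable_norm_apply {𝕜 E F ι : Type*} [NontriviallyNormedField 𝕜]
    [SeminormedAddCommGroup E] [NormedSpace 𝕜 E] [SeminormedAddCommGroup F] [NormedSpace 𝕜 F]
    (Φ : E →L[𝕜] F) {f : ι → E} (h : Summable fun i => ‖f i‖) :
    Summable fun i => ‖Φ (f i)‖ :=
  (h.mul_left ‖Φ‖).of_nonneg_of_le (fun _ => norm_nonneg _) fun i => Φ.le_opNorm (f i)

section Neumann

variable {α : Type*} [Ring α] [TopologicalSpace α] [IsTopologicalRing α] [T2Space α] {x : α}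

theorem Summable.isUnit_one_sub (h : Summable (x ^ ·)) : IsUnit (1 - x) :=
  ⟨⟨1 - x, ∑' i, x ^ i, h.one_sub_mul_tsum_pow, h.tsum_pow_mul_one_sub⟩, rfl⟩

theorem Summable.hasSum_inverse_one_sub (h : Summable (x ^ ·)) :
    HasSum (x ^ ·) (Ring.inverse (1 - x)) := by
  rw [show Ring.inverse (1 - x) = ∑' i, x ^ i from
    Ring.inverse_unit ⟨1 - x, ∑' i, x ^ i, h.one_sub_mul_tsum_pow, h.tsum_pow_mul_one_sub⟩]
  exact h.hasSum

end Neumann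

namespace Companion

variable {𝕜 : Type*} [NormedField 𝕜] {H : Type*} [NormedAddCommGroup H] [NormedSpace 𝕜 H]
  {p : ℕ}

def IsCompanionOperator (A : Fin p → H →L[𝕜] H)
    (Atil : PiLp 2 (fun _ : Fin p => H) →L[𝕜] PiLp 2 (fun _ : Fin p => H)) : Prop :=
  ∀ (f : PiLp 2 (fun _ : Fin p => H)) (i : Fin p),
    Atil f i = if (i : ℕ) = 0 then ∑ j : Fin p, A j (f j)
      else f ⟨(i : ℕ) - 1, lt_of_le_of_lt (Nat.sub_le _ _) i.isLt⟩

def arPolynomial (A : Fin p → H →L[𝕜] H) (z : 𝕜) : H →L[𝕜] H :=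
  1 - ∑ j : Fin p, z ^ ((j : ℕ) + 1) • A j

def geomVec (p : ℕ) (z : 𝕜) (g : H) : PiLp 2 (fun _ : Fin p => H) :=
  WithLp.toLp 2 fun i => z ^ (i : ℕ) • g

variable {A : Fin p → H →L[𝕜] H}
  {Atil : PiLp 2 (fun _ : Fin p => H) →L[𝕜] PiLp 2 (fun _ : Fin p => H)}
  {P1s : H →L[𝕜] PiLp 2 (fun _ : Fin p => H)}

theorem one_sub_smul_apply (z : 𝕜) (f : PiLp 2 (fun _ : Fin p => H)) (i : Fin p) :
    (1 - z • Atil) f i = f i - z • Atil f i := rfl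

theorem one_sub_smul_apply_geomVec (hAtil : IsCompanionOperator A Atil)
    (hP1s : ∀ (g : H) (i : Fin p), P1s g i = if (i : ℕ) = 0 then g else 0) (z : 𝕜) (g : H) :
    (1 - z • Atil) (geomVec p z g) = P1s (arPolynomial A z g) := by
  ext i
  rw [one_sub_smul_apply, hAtil, hP1s]
  by_cases hi : (i : ℕ) = 0
  · rw [if_pos hi, if_pos hi]
    simp only [geomVec, arPolynomial, hi, pow_zero, one_smul, map_smul,
      Finset.smul_sum, smul_smul, ← pow_succ', sub_apply, one_apply_eq_self, sum_apply,
      smul_apply]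
  · rw [if_neg hi, if_neg hi]
    obtain ⟨k, hk⟩ := Nat.exists_eq_succ_of_ne_zero hi
    simp only [geomVec, hk, Nat.succ_sub_one, smul_smul, ← pow_succ', sub_self]

theorem eq_geomVec_of_one_sub_smul_apply_eq (hAtil : IsCompanionOperator A Atil)
    (hP1s : ∀ (g : H) (i : Fin p), P1s g i = if (i : ℕ) = 0 then g else 0)
    (hp : 0 < p) {z : 𝕜} {f : PiLp 2 (fun _ : Fin p => H)}
    {g : H} (hf : (1 - z • Atil) f = P1s g) : f = geomVec p z (f ⟨0, hp⟩) := by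
  have hshift : ∀ k (hk : k + 1 < p), f ⟨k + 1, hk⟩ = z • f ⟨k, by omega⟩ := by
    intro k hk
    have := congrArg (· ⟨k + 1, hk⟩) hf
    rw [one_sub_smul_apply, hAtil, hP1s, if_neg k.succ_ne_zero, if_neg k.succ_ne_zero,
      sub_eq_zero] at this
    exact this
  ext ⟨i, hi⟩
  induction i with
  | zero => simp [geomVec]
  | succ k ih =>
    rw [hshift k hi, ih (by omega)]
    simp only [geomVec, smul_smul, ← pow_succ']

theorem isUnit_arPolynomial_of_isUnit_one_sub_smul (hAtil : IsCompanionOperator A Atil)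
    (hp : 0 < p) {P1 : PiLp 2 (fun _ : Fin p => H) →L[𝕜] H}
    (hP1 : ∀ f : PiLp 2 (fun _ : Fin p => H), P1 f = f ⟨0, hp⟩)
    (hP1s : ∀ (g : H) (i : Fin p), P1s g i = if (i : ℕ) = 0 then g else 0)
    {z : 𝕜} (hT : IsUnit (1 - z • Atil)) :
    IsUnit (arPolynomial A z) ∧
      Ring.inverse (arPolynomial A z) = P1.comp ((Ring.inverse (1 - z • Atil)).comp P1s) := by
  set S := Ring.inverse (1 - z • Atil)
  set F := P1.comp (S.comp P1s)
  have hP1_P1s (g : H) : P1 (P1s g) = g := by simp [hP1, hP1s]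
  have hF_left : F * arPolynomial A z = 1 := by
    ext g
    calc F (arPolynomial A z g) = P1 ((S * (1 - z • Atil)) (geomVec p z g)) := by
          rw [mul_apply_eq_comp, one_sub_smul_apply_geomVec hAtil hP1s]; rfl
      _ = g := by rw [Ring.inverse_mul_cancel _ hT, one_apply_eq_self, hP1]; simp [geomVec]
  have hF_right : arPolynomial A z * F = 1 := by
    ext g
    have hf : (1 - z • Atil) (S (P1s g)) = P1s g := by
      rw [← mul_apply_eq_comp, Ring.mul_inverse_cancel _ hT, one_apply_eq_self]
    have hlift : P1s (arPolynomial A z (F g)) = P1s g := by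
      rw [← one_sub_smul_apply_geomVec hAtil hP1s, show F g = S (P1s g) ⟨0, hp⟩ from hP1 _,
        ← eq_geomVec_of_one_sub_smul_apply_eq hAtil hP1s hp hf, hf]
    simpa only [mul_apply_eq_comp, one_apply_eq_self, hP1_P1s] using congrArg P1 hlift
  exact ⟨⟨⟨_, F, hF_right, hF_left⟩, rfl⟩, Ring.inverse_unit ⟨_, F, hF_right, hF_left⟩⟩

end Companion

theorem companion_operator_neumann_inverts_ar_polynomial_general
    {H : Type*} [NormedAddCommGroup H] [InnerProductSpace ℂ H] [CompleteSpace H]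
    (p : ℕ) (hp : 0 < p) (A : Fin p → H →L[ℂ] H)
    (Atil : PiLp 2 (fun _ : Fin p => H) →L[ℂ] PiLp 2 (fun _ : Fin p => H))
    (hAtil : ∀ (f : PiLp 2 (fun _ : Fin p => H)) (i : Fin p),
      Atil f i =
        if h : (i : ℕ) = 0 then ∑ j : Fin p, A j (f j)
        else f ⟨(i : ℕ) - 1, lt_of_le_of_lt (Nat.sub_le _ _) i.isLt⟩)
    (j₀ : ℕ) (hnorm : ‖Atil ^ j₀‖ < 1)
    (P1 : PiLp 2 (fun _ : Fin p => H) →L[ℂ] H)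
    (hP1 : ∀ f : PiLp 2 (fun _ : Fin p => H), P1 f = f ⟨0, hp⟩)
    (P1s : H →L[ℂ] PiLp 2 (fun _ : Fin p => H))
    (hP1s : ∀ (g : H) (i : Fin p), P1s g i = if (i : ℕ) = 0 then g else 0) :
    ∀ z : ℂ, ‖z‖ ≤ 1 →
      IsUnit (1 - z • Atil) ∧
      IsUnit ((1 : H →L[ℂ] H) - ∑ j : Fin p, z ^ ((j : ℕ) + 1) • A j) ∧
      (Summable fun j : ℕ => ‖z ^ j • (P1.comp ((Atil ^ j).comp P1s))‖) ∧
      HasSum (fun j : ℕ => z ^ j • (P1.comp ((Atil ^ j).comp P1s)))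
        (Ring.inverse ((1 : H →L[ℂ] H) - ∑ j : Fin p, z ^ ((j : ℕ) + 1) • A j)) := by
  intro z hz
  have hsum : Summable fun j => ‖(z • Atil) ^ j‖ := by
    refine summable_norm_pow_of_norm_pow_lt_one (n := j₀) (lt_of_le_of_lt ?_ hnorm)
    rw [smul_pow, norm_smul, norm_pow]
    exact mul_le_of_le_one_left (norm_nonneg _) (pow_le_one₀ (norm_nonneg z) hz)
  have hT : IsUnit (1 - z • Atil) := hsum.of_norm.isUnit_one_sub
  obtain ⟨h𝒜, h𝒜_inv⟩ :=
    Companion.isUnit_arPolynomial_of_isUnit_one_sub_smul hAtil hp hP1 hP1s hT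
  let E := PiLp 2 (fun _ : Fin p => H)
  let Φ := ((ContinuousLinearMap.compL ℂ H E H).flip P1s).comp
    (ContinuousLinearMap.compL ℂ E E H P1)
  have hΦ (j : ℕ) : z ^ j • P1.comp ((Atil ^ j).comp P1s) = Φ ((z • Atil) ^ j) := by
    ext g; simp [Φ, smul_pow]
  simp only [hΦ]
  refine ⟨hT, h𝒜, Φ.summable_norm_apply hsum, ?_⟩
  exact h𝒜_inv ▸ hsum.of_norm.hasSum_inverse_one_sub.mapL Φ

/-- Let `Ã` be the companion operator of bounded operators `A_1,…,A_p`
on the Hilbert direct sum `H^p`, with `‖Ã^{j₀}‖ < 1` for some positive integer `j₀`. Then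
for every `z ∈ ℂ` with `|z| ≤ 1`: (i) `Id_{H^p} - z·Ã` is invertible; (ii) the operator
polynomial `𝒜(z) = Id_H - A_1 z - ⋯ - A_p z^p` is invertible; (iii) the series
`Σ_j z^j P₁ ∘ Ã^j ∘ P₁*` converges absolutely in operator norm and equals `𝒜(z)⁻¹`.
(Operators are indexed by `Fin p`, with `A j` standing for `A_{j+1}`.) -/
theorem companion_operator_neumann_inverts_ar_polynomial
    {H : Type*} [NormedAddCommGroup H] [InnerProductSpace ℂ H] [CompleteSpace H]
    (p : ℕ) (hp : 0 < p) (A : Fin p → H →L[ℂ] H)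
    (Atil : PiLp 2 (fun _ : Fin p => H) →L[ℂ] PiLp 2 (fun _ : Fin p => H))
    (hAtil : ∀ (f : PiLp 2 (fun _ : Fin p => H)) (i : Fin p),
      Atil f i =
        if h : (i : ℕ) = 0 then ∑ j : Fin p, A j (f j)
        else f ⟨(i : ℕ) - 1, lt_of_le_of_lt (Nat.sub_le _ _) i.isLt⟩)
    (j₀ : ℕ) (hj₀ : 0 < j₀) (hnorm : ‖Atil ^ j₀‖ < 1)
    (P1 : PiLp 2 (fun _ : Fin p => H) →L[ℂ] H)
    (hP1 : ∀ f : PiLp 2 (fun _ : Fin p => H), P1 f = f ⟨0, hp⟩)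
    (P1s : H →L[ℂ] PiLp 2 (fun _ : Fin p => H))
    (hP1s : ∀ (g : H) (i : Fin p), P1s g i = if (i : ℕ) = 0 then g else 0) :
    ∀ z : ℂ, ‖z‖ ≤ 1 →
      IsUnit (1 - z • Atil) ∧
      IsUnit ((1 : H →L[ℂ] H) - ∑ j : Fin p, z ^ ((j : ℕ) + 1) • A j) ∧
      (Summable fun j : ℕ => ‖z ^ j • (P1.comp ((Atil ^ j).comp P1s))‖) ∧
      HasSum (fun j : ℕ => z ^ j • (P1.comp ((Atil ^ j).comp P1s)))
        (Ring.inverse ((1 : H →L[ℂ] H) - ∑ j : Fin p, z ^ ((j : ℕ) + 1) • A j)) :=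
  companion_operator_neumann_inverts_ar_polynomial_general p hp A Atil hAtil j₀ hnorm P1 hP1 P1s
    hP1s
end

section
/- Let H be a complex Hilbert space, S a bounded linear operator on H, and a : ℕ → B(H) a sequence of bounded linear operators with Σ_{s=0}^∞ ‖a_s‖_{op} < ∞. For ω ∈ [0,2π] define A(ω) := Σ_{s=0}^∞ a_s e^{−isω} (the series converging absolutely in operator norm), and for h ∈ ℤ define R_h := Σ_{s=0}^∞ a_{s+h} ∘ S ∘ a_s* when h ≥ 0 and R_h := Σ_{s=0}^∞ a_s ∘ S ∘ a_{s+|h|}* when h < 0 (these series converge absolutely in operator norm). Then Σ_{h∈ℤ} ‖R_h‖_{op} < ∞, the map ω ↦ A(ω) S A(ω)* e^{ihω} is continuous and Bochner integrable on [0,2π], and R_h = (2π)^{−1} ∫_0^{2π} A(ω) S A(ω)* e^{ihω} dω for every h ∈ ℤ. -/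
/-!
Expanding both factors gives the trigonometric series
`e^{ihω} A(ω) S A(ω)* = ∑_{s,t} e^{i(h-s+t)ω} a_s S a_t*`, which converges absolutely and uniformly
because `‖a_s S a_t*‖ ≤ ‖a_s‖ ‖S‖ ‖a_t‖`. Hence the integrand is continuous, and integrating term by
term over `[0, 2π]` kills every term except those on the diagonal `s - t = h`, which sum to `R_h`.
Reindexing the pairs `(s, t)` by `(s - t, min s t) ∈ ℤ × ℕ` gives `∑_h ‖R_h‖ ≤ ∑_{s,t} ‖a_s S a_t*‖`.
-/

open MeasureTheory Real Complex Filter ComplexConjugate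

theorem integral_Icc_exp_I_mul_int_mul (k : ℤ) :
    ∫ ω in Set.Icc (0 : ℝ) (2 * π), exp (I * k * ω) = if k = 0 then (2 * π : ℂ) else 0 := by
  rw [integral_Icc_eq_integral_Ioc, ← intervalIntegral.integral_of_le two_pi_pos.le]
  split_ifs with hk
  · simp [hk]
  · have hIk : I * k ≠ 0 := mul_ne_zero I_ne_zero (Int.cast_ne_zero.mpr hk)
    have hperiod : exp (I * k * (2 * π)) = 1 := by
      rw [← exp_int_mul_two_pi_mul_I k]; ring_nf
    simp [integral_exp_mul_complex hIk, hperiod]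

theorem norm_exp_I_mul_int_mul (k : ℤ) (ω : ℝ) : ‖exp (I * k * ω)‖ = 1 := by
  simp [norm_exp]

section TrigonometricSeries

variable {E ι : Type*} [NormedAddCommGroup E] [NormedSpace ℂ E] [CompleteSpace E]
  {c : ι → E} (hc : Summable fun i => ‖c i‖) (k : ι → ℤ)
include hc

theorem continuous_tsum_exp_smul : Continuous fun ω : ℝ => ∑' i, exp (I * k i * ω) • c i :=
  continuous_tsum (fun _ => by fun_prop) hc fun i ω => by
    rw [norm_smul, norm_exp_I_mul_int_mul, one_mul]

theorem integral_Icc_tsum_exp_smul [Countable ι] :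
    ∫ ω in Set.Icc (0 : ℝ) (2 * π), ∑' i, exp (I * k i * ω) • c i =
      (2 * π) • ∑' i, if k i = 0 then c i else 0 := by
  have hint : ∀ i, Integrable (fun ω : ℝ => exp (I * k i * ω) • c i)
      (volume.restrict (Set.Icc 0 (2 * π))) :=
    fun i => Continuous.integrableOn_Icc (by fun_prop)
  have hnorm : Summable fun i => ∫ ω in Set.Icc (0 : ℝ) (2 * π), ‖exp (I * k i * ω) • c i‖ := by
    simp_rw [norm_smul, norm_exp_I_mul_int_mul, one_mul, setIntegral_const]
    exact hc.const_smul _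
  rw [← integral_tsum_of_summable_integral_norm hint hnorm, ← tsum_const_smul'']
  refine tsum_congr fun i => ?_
  rw [integral_smul_const, integral_Icc_exp_I_mul_int_mul]
  split_ifs <;> simp [← Complex.coe_smul]

end TrigonometricSeries

/-- Enumerates the pairs `(s, t)` with `s - t = h` by `min s t`. -/
def lagIndex (h : ℤ) (t : ℕ) : ℕ × ℕ := (t + h.toNat, t + (-h).toNat)

theorem lagIndex_of_nonneg {h : ℤ} (hh : 0 ≤ h) (t : ℕ) : lagIndex h t = (t + h.toNat, t) := by
  simp [lagIndex, Int.toNat_eq_zero.mpr (neg_nonpos.mpr hh)]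

theorem lagIndex_of_neg {h : ℤ} (hh : h < 0) (t : ℕ) : lagIndex h t = (t, t + (-h).toNat) := by
  simp [lagIndex, Int.toNat_eq_zero.mpr hh.le]

theorem injective_lagIndex : Function.Injective fun q : ℤ × ℕ => lagIndex q.1 q.2 := by
  rintro ⟨h, t⟩ ⟨h', t'⟩ he
  simp only [lagIndex, Prod.mk.injEq] at he ⊢
  omega

theorem mem_range_lagIndex {h : ℤ} {p : ℕ × ℕ} :
    p ∈ Set.range (lagIndex h) ↔ h - ((p.1 : ℤ) - p.2) = 0 := by
  constructor
  · rintro ⟨t, rfl⟩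
    simp only [lagIndex]
    omega
  · intro hp
    exact ⟨min p.1 p.2, Prod.ext (by simp only [lagIndex]; omega) (by simp only [lagIndex]; omega)⟩

theorem tsum_ite_eq_of_hasSum_lagIndex {M : Type*} [AddCommMonoid M] [TopologicalSpace M]
    [T2Space M] {c : ℕ × ℕ → M} {h : ℤ} {r : M} (hc : HasSum (fun t => c (lagIndex h t)) r) :
    ∑' p : ℕ × ℕ, (if h - ((p.1 : ℤ) - p.2) = 0 then c p else 0) = r := by
  have hinj : Function.Injective (lagIndex h) := fun t t' he =>
    (Prod.mk.inj (injective_lagIndex (a₁ := (h, t)) (a₂ := (h, t')) he)).2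
  have hsupp : Function.support (fun p : ℕ × ℕ => if h - ((p.1 : ℤ) - p.2) = 0 then c p else 0)
      ⊆ Set.range (lagIndex h) := fun p hp =>
    mem_range_lagIndex.mpr (by_contra fun hne => hp (if_neg hne))
  rw [← hinj.tsum_eq hsupp, ← hc.tsum_eq]
  exact tsum_congr fun t => if_pos (mem_range_lagIndex.mp ⟨t, rfl⟩)

theorem summable_norm_of_hasSum_fiberwise {β γ F : Type*} [SeminormedAddCommGroup F]
    {f : β × γ → F} {g : β → F} (hf : Summable fun q => ‖f q‖)
    (hg : ∀ b, HasSum (fun c => f (b, c)) (g b)) : Summable fun b => ‖g b‖ := by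
  obtain ⟨hfiber, htotal⟩ := (summable_prod_of_nonneg fun q => norm_nonneg (f q)).mp hf
  exact htotal.of_nonneg_of_le (fun _ => norm_nonneg _) fun b =>
    (hg b).norm_le_of_bounded (hfiber b).hasSum fun _ => le_rfl

theorem smul_mul_mul_star_smul {R : Type*} [Ring R] [StarRing R] [Algebra ℂ R] [StarModule ℂ R]
    (z w : ℂ) (X S Y : R) : (z • X) * S * star (w • Y) = (z * conj w) • (X * S * star Y) := by
  rw [star_smul, smul_mul_assoc, smul_mul_assoc, mul_smul_comm, smul_smul]
  rfl

theorem summable_norm_exp_smul {E : Type*} [SeminormedAddCommGroup E] [NormedSpace ℂ E]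
    {a : ℕ → E} (ha : Summable fun s => ‖a s‖) (ω : ℝ) :
    Summable fun s : ℕ => ‖exp (-(I * s * ω)) • a s‖ := by
  simpa [norm_smul, norm_exp] using ha

section StarRing

variable {R : Type*} [NormedRing R] [StarRing R] [NormedStarGroup R]

theorem summable_norm_mul_mul_star {ι κ : Type*} {x : ι → R} {y : κ → R}
    (hx : Summable fun i => ‖x i‖) (hy : Summable fun j => ‖y j‖) (S : R) :
    Summable fun p : ι × κ => ‖x p.1 * S * star (y p.2)‖ := by
  refine ((hx.mul_right ‖S‖).mul_of_nonneg hy (fun _ => by positivity) fun _ => norm_nonneg _)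
    |>.of_nonneg_of_le (fun _ => norm_nonneg _) fun p => ?_
  simpa only [norm_star] using norm_mul₃_le (a := x p.1) (b := S) (c := star (y p.2))

theorem hasSum_mul_mul_star [CompleteSpace R] {ι κ : Type*} {x : ι → R} {y : κ → R} {X Y : R}
    (hx : HasSum x X) (hy : HasSum y Y) (hx' : Summable fun i => ‖x i‖)
    (hy' : Summable fun j => ‖y j‖) (S : R) :
    HasSum (fun p : ι × κ => x p.1 * S * star (y p.2)) (X * S * star Y) :=
  HasSum.mul (f := fun i => x i * S) (g := fun j => star (y j)) (hx.mul_right S) hy.star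
    (summable_norm_mul_mul_star hx' hy' S).of_norm

variable [NormedAlgebra ℂ R] [StarModule ℂ R] [CompleteSpace R]
  {a : ℕ → R} (ha : Summable fun s => ‖a s‖) (S : R) {A : ℝ → R}
  (hA : ∀ ω : ℝ, HasSum (fun s : ℕ => exp (-(I * s * ω)) • a s) (A ω))
include ha hA

theorem hasSum_exp_smul_mul_mul_star (h : ℤ) (ω : ℝ) :
    HasSum (fun p : ℕ × ℕ => exp (I * ↑(h - ((p.1 : ℤ) - p.2)) * ω) • (a p.1 * S * star (a p.2)))
      (exp (I * h * ω) • (A ω * S * star (A ω))) := by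
  have hexpand := (hasSum_mul_mul_star (hA ω) (hA ω) (summable_norm_exp_smul ha ω)
    (summable_norm_exp_smul ha ω) S).const_smul (exp (I * h * ω))
  convert hexpand using 2 with p
  rw [smul_mul_mul_star_smul, smul_smul, ← exp_conj, ← Complex.exp_add, ← Complex.exp_add]
  congr 2
  simp only [map_neg, map_mul, conj_I, conj_ofReal, map_natCast]
  push_cast
  ring

theorem spectral_identity_of_hasSum {h : ℤ} {r : R}
    (hr : HasSum (fun t => a (lagIndex h t).1 * S * star (a (lagIndex h t).2)) r) :
    ContinuousOn (fun ω : ℝ => exp (I * h * ω) • (A ω * S * star (A ω))) (Set.Icc 0 (2 * π)) ∧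
    IntegrableOn (fun ω : ℝ => exp (I * h * ω) • (A ω * S * star (A ω))) (Set.Icc 0 (2 * π)) ∧
    r = (2 * π : ℝ)⁻¹ •
      ∫ ω in Set.Icc (0 : ℝ) (2 * π), exp (I * h * ω) • (A ω * S * star (A ω)) := by
  have hc := summable_norm_mul_mul_star ha ha S
  have hseries : (fun ω : ℝ => exp (I * h * ω) • (A ω * S * star (A ω))) = fun ω : ℝ =>
      ∑' p : ℕ × ℕ, exp (I * ↑(h - ((p.1 : ℤ) - p.2)) * ω) • (a p.1 * S * star (a p.2)) :=
    funext fun ω => (hasSum_exp_smul_mul_mul_star ha S hA h ω).tsum_eq.symm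
  have hcont := continuous_tsum_exp_smul hc fun p : ℕ × ℕ => h - ((p.1 : ℤ) - p.2)
  rw [hseries]
  refine ⟨hcont.continuousOn, hcont.integrableOn_Icc, ?_⟩
  rw [integral_Icc_tsum_exp_smul hc,
    tsum_ite_eq_of_hasSum_lagIndex (c := fun p => a p.1 * S * star (a p.2)) hr]
  exact (inv_smul_smul₀ two_pi_pos.ne' r).symm

end StarRing

/-- Let `S` be a bounded operator on a complex Hilbert space `H` and
`a : ℕ → B(H)` with `Σ ‖a_s‖ < ∞`. Let `A(ω) = Σ_s a_s e^{-isω}` and, for `h ∈ ℤ`,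
`R_h = Σ_s a_{s+h} S a_s*` (for `h ≥ 0`), `R_h = Σ_s a_s S a_{s+|h|}*` (for `h < 0`),
all series converging absolutely in operator norm. Then `Σ_h ‖R_h‖ < ∞`, the map
`ω ↦ e^{ihω} A(ω) S A(ω)*` is continuous and Bochner integrable on `[0,2π]`, and
`R_h = (2π)⁻¹ ∫₀^{2π} e^{ihω} A(ω) S A(ω)* dω` for all `h ∈ ℤ`. -/
theorem causal_filter_white_noise_spectral_identity
    {H : Type*} [NormedAddCommGroup H] [InnerProductSpace ℂ H] [CompleteSpace H]
    (S : H →L[ℂ] H) (a : ℕ → H →L[ℂ] H)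
    (ha : Summable fun s => ‖a s‖)
    (A : ℝ → H →L[ℂ] H)
    (hA : ∀ ω : ℝ, HasSum (fun s : ℕ => Complex.exp (-(Complex.I * s * ω)) • a s) (A ω))
    (R : ℤ → H →L[ℂ] H)
    (hRpos : ∀ h : ℤ, 0 ≤ h →
      HasSum (fun s : ℕ => (a (s + h.toNat)).comp (S.comp (ContinuousLinearMap.adjoint (a s))))
        (R h))
    (hRneg : ∀ h : ℤ, h < 0 →
      HasSum (fun s : ℕ => (a s).comp (S.comp (ContinuousLinearMap.adjoint (a (s + (-h).toNat)))))
        (R h)) :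
    (∀ ω : ℝ, Summable fun s : ℕ => ‖Complex.exp (-(Complex.I * s * ω)) • a s‖) ∧
    (∀ h : ℤ, 0 ≤ h →
      Summable fun s : ℕ => ‖(a (s + h.toNat)).comp (S.comp (ContinuousLinearMap.adjoint (a s)))‖) ∧
    (∀ h : ℤ, h < 0 →
      Summable fun s : ℕ => ‖(a s).comp (S.comp (ContinuousLinearMap.adjoint (a (s + (-h).toNat))))‖) ∧
    Summable (fun h : ℤ => ‖R h‖) ∧
    (∀ h : ℤ,
      ContinuousOn
        (fun ω : ℝ => Complex.exp (Complex.I * h * ω) •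
          ((A ω).comp (S.comp (ContinuousLinearMap.adjoint (A ω)))))
        (Set.Icc 0 (2 * π)) ∧
      IntegrableOn
        (fun ω : ℝ => Complex.exp (Complex.I * h * ω) •
          ((A ω).comp (S.comp (ContinuousLinearMap.adjoint (A ω)))))
        (Set.Icc 0 (2 * π)) MeasureTheory.volume ∧
      R h = (2 * π : ℝ)⁻¹ •
        ∫ ω in Set.Icc (0 : ℝ) (2 * π),
          Complex.exp (Complex.I * h * ω) •
            ((A ω).comp (S.comp (ContinuousLinearMap.adjoint (A ω)))) ∂MeasureTheory.volume) := by
  -- In `H →L[ℂ] H`, `X * S * star Y` is definitionally `X.comp (S.comp (adjoint Y))`.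
  have hR : ∀ h, HasSum (fun t => a (lagIndex h t).1 * S * star (a (lagIndex h t).2)) (R h) := by
    intro h
    rcases le_or_gt 0 h with hh | hh
    · simp only [lagIndex_of_nonneg hh]
      exact hRpos h hh
    · simp only [lagIndex_of_neg hh]
      exact hRneg h hh
  have hlag : Summable fun q : ℤ × ℕ =>
      ‖a (lagIndex q.1 q.2).1 * S * star (a (lagIndex q.1 q.2).2)‖ :=
    (summable_norm_mul_mul_star ha ha S).comp_injective injective_lagIndex
  refine ⟨summable_norm_exp_smul ha, fun h hh => ?_, fun h hh => ?_,
    summable_norm_of_hasSum_fiberwise hlag hR, fun h => spectral_identity_of_hasSum ha S hA (hR h)⟩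
  · have hfiber := hlag.prod_factor h
    simp only [lagIndex_of_nonneg hh] at hfiber
    exact hfiber
  · have hfiber := hlag.prod_factor h
    simp only [lagIndex_of_neg hh] at hfiber
    exact hfiber
end

section
/- Let d ∈ (−1/2, 1/2) with d ≠ 0, and let c_k := Γ(k+d) / (Γ(d) · Γ(k+1)) for k ∈ ℕ be the fractional-integration coefficients. Then for every ω ∈ (0, 2π), the partial sums Σ_{k=0}^{N} c_k e^{−ikω} converge, as N → ∞, to (1 − e^{−iω})^{−d}, where z^{−d} denotes the principal branch of the complex power. -/
/-!
Inside the unit disc the `c_k` are the coefficients of the binomial series,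
`c_k = (d + k - 1 choose k)`, so `∑ c_k w ^ k = (1 - w) ^ (-d)` for `‖w‖ < 1`. On the unit circle,
at `z ≠ 1`, the series still converges by Dirichlet's test: `c_k → 0` by Euler's limit formula
for `Γ`, and `(c_k)_{k ≥ 1}` is monotone because `c_{k+1} / c_k = (k + d) / (k + 1) ∈ (0, 1)`.
Abel's limit theorem along the radius ending at `z`, together with the continuity of
`w ↦ (1 - w) ^ (-d)` at `z` (where `1 - z` lies in the slit plane), identifies the sum.
-/

open Real Filter Complex Finset

open scoped Nat Topology

theorem Real.Gamma_add_nat_eq_prod_mul {a : ℝ} (ha : ∀ k : ℕ, a ≠ -k) (n : ℕ) :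
    Real.Gamma (a + n) = (∏ j ∈ range n, (a + j)) * Real.Gamma a := by
  induction n with
  | zero => simp
  | succ n ih =>
    rw [Nat.cast_succ, ← add_assoc, Real.Gamma_add_one fun h => ha n (eq_neg_of_add_eq_zero_left h),
      ih, prod_range_succ]
    ring

theorem ascPochhammer_eval_eq_prod_range {R : Type*} [CommSemiring R] (n : ℕ) (r : R) :
    (ascPochhammer R n).eval r = ∏ j ∈ range n, (r + j) := by
  induction n with
  | zero => simp
  | succ n ih => simp [ascPochhammer_succ_right, ih, prod_range_succ]

theorem Ring.choose_add_sub_one_eq_prod {K : Type*} [Field K] [CharZero K] (a : K) (n : ℕ) :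
    Ring.choose (a + n - 1) n = (∏ j ∈ range n, (a + j)) / n ! := by
  rw [← Ring.multichoose_eq, eq_div_iff (Nat.cast_ne_zero.2 n.factorial_ne_zero), mul_comm,
    ← nsmul_eq_mul, Ring.factorial_nsmul_multichoose_eq_ascPochhammer,
    Polynomial.ascPochhammer_smeval_eq_eval, ascPochhammer_eval_eq_prod_range]

theorem norm_geom_sum_le {z : ℂ} (hz : ‖z‖ ≤ 1) (hz1 : z ≠ 1) (n : ℕ) :
    ‖∑ i ∈ range n, z ^ i‖ ≤ 2 / ‖z - 1‖ := by
  rw [geom_sum_eq hz1, norm_div]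
  gcongr
  calc ‖z ^ n - 1‖ ≤ ‖z ^ n‖ + ‖(1 : ℂ)‖ := norm_sub_le _ _
    _ ≤ 1 + 1 := by gcongr; simpa using pow_le_one₀ (norm_nonneg z) hz; simp
    _ = 2 := by norm_num

theorem cauchySeq_sum_range_mul_pow {f : ℕ → ℝ} (hf : Antitone f ∨ Monotone f)
    (hf0 : Tendsto f atTop (𝓝 0)) {z : ℂ} (hz : ‖z‖ ≤ 1) (hz1 : z ≠ 1) :
    CauchySeq fun n => ∑ i ∈ range n, (f i : ℂ) * z ^ i := by
  simp_rw [← Complex.real_smul]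
  rcases hf with hf | hf
  · exact hf.cauchySeq_series_mul_of_tendsto_zero_of_bounded hf0 (norm_geom_sum_le hz hz1)
  · exact hf.cauchySeq_series_mul_of_tendsto_zero_of_bounded hf0 (norm_geom_sum_le hz hz1)

theorem Complex.tendsto_sum_range_mul_pow_of_continuousAt {a : ℕ → ℂ} {F : ℂ → ℂ} {z : ℂ}
    (hz : ‖z‖ ≤ 1) (hS : CauchySeq fun n => ∑ i ∈ range n, a i * z ^ i)
    (hF : ∀ w : ℂ, ‖w‖ < 1 → HasSum (fun n => a n * w ^ n) (F w)) (hFz : ContinuousAt F z) :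
    Tendsto (fun n => ∑ i ∈ range n, a i * z ^ i) atTop (𝓝 (F z)) := by
  obtain ⟨l, hl⟩ := cauchySeq_tendsto_of_complete hS
  have hradial : Tendsto (fun ζ => ∑' n, a n * z ^ n * ζ ^ n) ((𝓝[<] 1).map ofReal)
      (𝓝 (F z)) := by
    rw [tendsto_map'_iff]
    have hxz : Tendsto (fun x : ℝ => (x : ℂ) * z) (𝓝[<] 1) (𝓝 z) :=
      (Continuous.tendsto' (by fun_prop) 1 z (by simp)).mono_left nhdsWithin_le_nhds
    refine (hFz.tendsto.comp hxz).congr' ?_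
    filter_upwards [Ioo_mem_nhdsLT zero_lt_one] with x hx
    have hnorm : ‖(x : ℂ) * z‖ < 1 := by
      rw [norm_mul, norm_real, Real.norm_of_nonneg hx.1.le]
      exact (mul_le_of_le_one_right hx.1.le hz).trans_lt hx.2
    rw [Function.comp_apply, Function.comp_apply, ← (hF _ hnorm).tsum_eq]
    exact tsum_congr fun n => by ring
  rwa [tendsto_nhds_unique (tendsto_tsum_powerSeries_nhdsWithin_lt hl) hradial] at hl

noncomputable def fracIntCoeff (d : ℝ) (k : ℕ) : ℝ :=
  Real.Gamma (k + d) / (Real.Gamma d * Real.Gamma (k + 1))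

section fracIntCoeff

variable {d : ℝ}

theorem fracIntCoeff_eq_prod (hd : ∀ k : ℕ, d ≠ -k) (n : ℕ) :
    fracIntCoeff d n = (∏ j ∈ range n, (d + j)) / n ! := by
  have hΓ : Real.Gamma d ≠ 0 := Real.Gamma_ne_zero hd
  rw [fracIntCoeff, add_comm, Real.Gamma_add_nat_eq_prod_mul hd, Real.Gamma_nat_eq_factorial]
  field_simp

theorem fracIntCoeff_eq_choose (hd : ∀ k : ℕ, d ≠ -k) (n : ℕ) :
    fracIntCoeff d n = Ring.choose (d + n - 1) n := by
  rw [fracIntCoeff_eq_prod hd, Ring.choose_add_sub_one_eq_prod]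

theorem fracIntCoeff_succ (hd : ∀ k : ℕ, d ≠ -k) (n : ℕ) :
    fracIntCoeff d (n + 1) = (d + n) / (n + 1) * fracIntCoeff d n := by
  rw [fracIntCoeff_eq_prod hd, fracIntCoeff_eq_prod hd, prod_range_succ, Nat.factorial_succ]
  push_cast
  field_simp

theorem hasSum_fracIntCoeff_mul_pow (hd : ∀ k : ℕ, d ≠ -k) {w : ℂ} (hw : ‖w‖ < 1) :
    HasSum (fun n => (fracIntCoeff d n : ℂ) * w ^ n) ((1 - w) ^ (-(d : ℂ))) := by
  have h := (Complex.one_div_one_sub_cpow_hasFPowerSeriesOnBall_zero d).hasSum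
    (y := w) (by simpa [enorm_eq_nnnorm, ← NNReal.coe_lt_coe] using hw)
  simp only [FormalMultilinearSeries.ofScalars_apply_eq, smul_eq_mul, zero_add, one_div] at h
  have hc : ∀ n : ℕ, (fracIntCoeff d n : ℂ) = Ring.choose ((d : ℂ) + n - 1) n := fun n => by
    rw [fracIntCoeff_eq_choose hd]
    push_cast
    rfl
  simpa only [hc, cpow_neg] using h

theorem fracIntCoeff_succ_mul_GammaSeq (hd : ∀ k : ℕ, d ≠ -k) (n : ℕ) :
    fracIntCoeff d (n + 1) * Real.GammaSeq d n = n ^ d / (n + 1) := by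
  have hP : ∏ j ∈ range (n + 1), (d + j) ≠ 0 :=
    prod_ne_zero_iff.2 fun j _ h => hd j (eq_neg_of_add_eq_zero_left h)
  rw [fracIntCoeff_eq_prod hd, Real.GammaSeq, Nat.factorial_succ]
  push_cast
  field_simp

theorem tendsto_fracIntCoeff_atTop (hd : ∀ k : ℕ, d ≠ -k) (hlt : d < 1) :
    Tendsto (fracIntCoeff d) atTop (𝓝 0) := by
  have hΓ : Real.Gamma d ≠ 0 := Real.Gamma_ne_zero hd
  have hpow : Tendsto (fun n : ℕ => (n : ℝ) ^ d / (n + 1)) atTop (𝓝 0) := by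
    have hlim := ((tendsto_rpow_neg_atTop (sub_pos.2 hlt)).comp
      tendsto_natCast_atTop_atTop).mul (tendsto_natCast_div_add_atTop (1 : ℝ))
    rw [zero_mul] at hlim
    refine hlim.congr' ?_
    filter_upwards [eventually_ne_atTop 0] with n hn
    rw [Function.comp_apply, neg_sub, Real.rpow_sub_one (Nat.cast_ne_zero.2 hn)]
    field_simp
  have hGammaSeq := Real.GammaSeq_tendsto_Gamma d
  have hquot := hpow.div hGammaSeq hΓ
  rw [zero_div] at hquot
  rw [← tendsto_add_atTop_iff_nat 1]
  refine hquot.congr' ?_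
  filter_upwards [hGammaSeq.eventually_ne hΓ] with n hn
  rw [Pi.div_apply, ← fracIntCoeff_succ_mul_GammaSeq hd, mul_div_cancel_right₀ _ hn]

theorem mul_fracIntCoeff_succ_nonneg (hd : ∀ k : ℕ, d ≠ -k) (hgt : -1 < d) (n : ℕ) :
    0 ≤ d * fracIntCoeff d (n + 1) := by
  have hP : 0 ≤ ∏ j ∈ range n, (d + (j + 1 : ℕ)) := prod_nonneg fun j _ => by
    push_cast
    linarith [(j.cast_nonneg : (0 : ℝ) ≤ j)]
  rw [fracIntCoeff_eq_prod hd, prod_range_succ', Nat.cast_zero, add_zero, mul_comm _ d,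
    ← mul_div_assoc, ← mul_assoc]
  exact div_nonneg (mul_nonneg (mul_self_nonneg d) hP) (by positivity)

theorem antitone_or_monotone_fracIntCoeff_succ (hd : ∀ k : ℕ, d ≠ -k)
    (hmem : d ∈ Set.Ioo (-1) 1) :
    Antitone (fun n => fracIntCoeff d (n + 1)) ∨ Monotone (fun n => fracIntCoeff d (n + 1)) := by
  have hstep : ∀ n : ℕ, fracIntCoeff d (n + 2) - fracIntCoeff d (n + 1)
      = (d - 1) / (n + 2) * fracIntCoeff d (n + 1) := fun n => by
    rw [fracIntCoeff_succ hd (n + 1)]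
    push_cast
    field_simp
    ring
  have hneg : ∀ n : ℕ, (d - 1) / (n + 2) ≤ 0 := fun n =>
    div_nonpos_of_nonpos_of_nonneg (by linarith [hmem.2]) (by positivity)
  have hsign := mul_fracIntCoeff_succ_nonneg hd hmem.1
  rcases (by simpa using hd 0 : d ≠ 0).lt_or_gt with hd0 | hd0
  · refine Or.inr (monotone_nat_of_le_succ fun n => sub_nonneg.1 ?_)
    rw [hstep]
    exact mul_nonneg_of_nonpos_of_nonpos (hneg n) (nonpos_of_mul_nonneg_right (hsign n) hd0)
  · refine Or.inl (antitone_nat_of_succ_le fun n => sub_nonpos.1 ?_)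
    rw [hstep]
    exact mul_nonpos_of_nonpos_of_nonneg (hneg n) (nonneg_of_mul_nonneg_right (hsign n) hd0)

theorem cauchySeq_sum_range_fracIntCoeff_mul_pow (hd : ∀ k : ℕ, d ≠ -k)
    (hmem : d ∈ Set.Ioo (-1) 1) {z : ℂ} (hz : ‖z‖ ≤ 1) (hz1 : z ≠ 1) :
    CauchySeq fun n => ∑ i ∈ range n, (fracIntCoeff d i : ℂ) * z ^ i := by
  have htail := cauchySeq_sum_range_mul_pow (antitone_or_monotone_fracIntCoeff_succ hd hmem)
    ((tendsto_add_atTop_iff_nat 1).2 (tendsto_fracIntCoeff_atTop hd hmem.2)) hz hz1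
  rw [← cauchySeq_shift 1]
  convert ((uniformContinuous_const_smul z).comp_cauchySeq htail).const_add
    (x := (fracIntCoeff d 0 : ℂ)) using 2 with n
  rw [sum_range_succ', Function.comp_apply, smul_eq_mul, mul_sum]
  simp [pow_succ', mul_left_comm, add_comm]

end fracIntCoeff

/-- For `d ∈ (-1/2,1/2)`, `d ≠ 0`, and `ω ∈ (0,2π)`, the partial sums of the
fractional-integration series `Σ_{k=0}^N c_k e^{-ikω}`, with `c_k = Γ(k+d)/(Γ(d)Γ(k+1))`,
converge to `(1 - e^{-iω})^{-d}` (principal branch of the complex power). -/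
theorem fractional_integration_frequency_response
    (d : ℝ) (hd : d ∈ Set.Ioo (-(1/2) : ℝ) (1/2)) (hd0 : d ≠ 0)
    (c : ℕ → ℝ)
    (hc : ∀ k : ℕ, c k = Real.Gamma (k + d) / (Real.Gamma d * Real.Gamma (k + 1)))
    (ω : ℝ) (hω : ω ∈ Set.Ioo (0 : ℝ) (2 * π)) :
    Tendsto
      (fun N : ℕ => ∑ k ∈ Finset.range (N + 1),
        (c k : ℂ) * Complex.exp (-(Complex.I * k * ω)))
      atTop
      (nhds ((1 - Complex.exp (-(Complex.I * ω))) ^ (-(d : ℂ)))) := by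
  obtain rfl : c = fracIntCoeff d := funext hc
  have hmem : d ∈ Set.Ioo (-1) 1 := ⟨by linarith [hd.1], by linarith [hd.2]⟩
  have hnat : ∀ k : ℕ, d ≠ -k := by
    rintro (_ | k) h
    · exact hd0 (by simpa using h)
    · push_cast at h
      linarith [hmem.1, (k.cast_nonneg : (0 : ℝ) ≤ k)]
  set z := Complex.exp (-(Complex.I * ω)) with hz_def
  have hz : ‖z‖ = 1 := by simpa [z, neg_mul, mul_comm] using norm_exp_ofReal_mul_I (-ω)
  have hslit : 1 - z ∈ slitPlane := by
    have hcos : Real.cos ω < 1 := (Real.cos_le_one ω).lt_of_ne fun h =>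
      hω.1.ne' ((Real.cos_eq_one_iff_of_lt_of_lt (by linarith [hω.1, Real.pi_pos]) hω.2).1 h)
    exact mem_slitPlane_iff.2 (Or.inl (by simpa [z, Complex.exp_re] using hcos))
  have hz1 : z ≠ 1 := fun h => slitPlane_ne_zero hslit (by rw [h, sub_self])
  have hF : ContinuousAt (fun w : ℂ => (1 - w) ^ (-(d : ℂ))) z :=
    (continuousAt_cpow_const hslit).comp (continuous_const.sub continuous_id).continuousAt
  have hlim := Complex.tendsto_sum_range_mul_pow_of_continuousAt hz.le
    (cauchySeq_sum_range_fracIntCoeff_mul_pow hnat hmem hz.le hz1)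
    (fun w hw => hasSum_fracIntCoeff_mul_pow hnat hw) hF
  refine ((tendsto_add_atTop_iff_nat 1).2 hlim).congr fun N => sum_congr rfl fun k _ => ?_
  rw [hz_def, ← Complex.exp_nat_mul]
  ring_nf
end
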